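/- For the random-walk dynamical system (X,𝒜,μ,T) and the exhaustive family 𝒱={B_{γ,r}×[0,1)² : γ∈ℤ^d, r∈ℤ⁺}, property (A1) holds: for any fixed t∈ℤ, μ(T^{-t}V Δ V)=o(μ(V)) as μ(V)→∞ along 𝒱. -/

import Mathlib

noncomputable section

open MeasureTheory Filter Topology

/-- The phase space `X = ℤ^d × [0,1)²` (embedded in `ℤ^d × ℝ²`; the invariant measure
is supported on `ℤ^d × [0,1)²`). -/
abbrev RWSpace (d : ℕ) := (Fin d → ℤ) × ℝ × ℝ

/-- The data of a random walk on `ℤ^d`: a probability distribution `p` on `ℤ^d` together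
with an enumeration `e` of `ℤ^d` (whose restriction to the support of `p` enumerates the
set `D` of active directions; indices carrying zero probability contribute empty
rectangles and do not affect the map). -/
structure RW (d : ℕ) where
  p : (Fin d → ℤ) → ℝ
  nonneg : ∀ β, 0 ≤ p β
  total : HasSum p 1
  e : ℕ ≃ (Fin d → ℤ)

namespace RW

variable {d : ℕ}

/-- The cumulative sums `q_k = Σ_{j<k} p_{β^{(j)}}`. -/
def q (R : RW d) (k : ℕ) : ℝ := ∑ j ∈ Finset.range k, R.p (R.e j)

/-- The index `k` such that `y ∈ [q_k, q_{k+1})` (for `y ∈ [0,1)`). -/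
def idx (R : RW d) (y : ℝ) : ℕ := sSup {j | R.q j ≤ y}

/-- The random-walk (coupled bakers') map
`T(α; y₁, y₂) = (α + β^{(k)}; p_{β^{(k)}}⁻¹(y₁ − q_{k-1}), p_{β^{(k)}} y₂ + q_{k-1})`. -/
def T (R : RW d) : RWSpace d → RWSpace d := fun x =>
  (x.1 + R.e (R.idx x.2.1),
   (x.2.1 - R.q (R.idx x.2.1)) / R.p (R.e (R.idx x.2.1)),
   R.p (R.e (R.idx x.2.1)) * x.2.2 + R.q (R.idx x.2.1))

/-- The inverse of the random-walk map. -/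
def Tinv (R : RW d) : RWSpace d → RWSpace d := fun x =>
  (x.1 - R.e (R.idx x.2.2),
   R.p (R.e (R.idx x.2.2)) * x.2.1 + R.q (R.idx x.2.2),
   (x.2.2 - R.q (R.idx x.2.2)) / R.p (R.e (R.idx x.2.2)))

/-- The iterate `T^t` for `t ∈ ℤ` (using the inverse map for negative times). -/
def iterZ (R : RW d) (t : ℤ) : RWSpace d → RWSpace d :=
  if 0 ≤ t then (R.T)^[t.toNat] else (R.Tinv)^[(-t).toNat]

end RW

/-- The invariant measure `μ`: counting measure on `ℤ^d` times Lebesgue measure on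
`[0,1)²`. -/
def rwMeasure (d : ℕ) : Measure (RWSpace d) :=
  (Measure.count : Measure (Fin d → ℤ)).prod
    ((volume.restrict (Set.Ico (0:ℝ) 1)).prod (volume.restrict (Set.Ico (0:ℝ) 1)))

/-- The set `V = B_{γ,r} × [0,1)²`, where `B_{γ,r}` is the square box of center `γ` and
radius `r` in `ℤ^d`. -/
def rwBox {d : ℕ} (γ : Fin d → ℤ) (r : ℕ) : Set (RWSpace d) :=
  {x | (∀ i, |x.1 i - γ i| ≤ (r : ℤ)) ∧ x.2.1 ∈ Set.Ico (0:ℝ) 1 ∧ x.2.2 ∈ Set.Ico (0:ℝ) 1}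

/-- The exhaustive family `𝒱 = {B_{γ,r} × [0,1)² : γ ∈ ℤ^d, r ∈ ℤ⁺}`. -/
def rwFamily (d : ℕ) : Set (Set (RWSpace d)) :=
  {V | ∃ γ : Fin d → ℤ, ∃ r : ℕ, 1 ≤ r ∧ V = rwBox γ r}

/-- The (μ-uniform) infinite-volume limit of a set function `φ` along the family `𝒱`
equals `L`. -/
def IVLim {Y : Type*} [MeasurableSpace Y] (μ : Measure Y) (𝒱 : Set (Set Y))
    (φ : Set Y → ℝ) (L : ℝ) : Prop :=
  ∀ ε > 0, ∃ M : ℝ, 0 < M ∧ ∀ V ∈ 𝒱, M ≤ (μ V).toReal → |φ V - L| < ε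

/-- The normalized average `μ_V(F) = (1/μ(V)) ∫_V F dμ` of `F` over a set `V`. -/
def avgOn {Y : Type*} [MeasurableSpace Y] (μ : Measure Y) (F : Y → ℝ) (V : Set Y) : ℝ :=
  (∫ x in V, F x ∂μ) / (μ V).toReal

/-- `F` possesses the infinite-volume average `L` along the family `𝒱`. -/
def HasAvg {Y : Type*} [MeasurableSpace Y] (μ : Measure Y) (𝒱 : Set (Set Y))
    (F : Y → ℝ) (L : ℝ) : Prop :=
  IVLim μ 𝒱 (avgOn μ F) L

open scoped ENNReal
open Set

/-!
`T` is a skew product over a self-map of the unit square: `T^t (α, y) = (α + Φ_t y, Ψ_t y)` with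
`Ψ_t y ∈ [0,1)²`. So the slice of `T^{-t} V Δ V` over `y ∈ [0,1)²` is the symmetric difference of
`B_{γ,r}` and its translate by `-Φ_t y`, and `μ(T^{-t} V Δ V) / μ(V)` is at most the integral over
`y` of the relative defect of a box of radius `r` under the shift `Φ_t y`. For a fixed shift `β`
with `‖β‖_∞ ≤ s ≤ r` the box sits between `B_{γ,r-s}` and `B_{γ,r+s}`, so the defect is at most
`((2r+2s+1)^d - (2r-2s+1)^d) / (2r+1)^d → 0`; being also at most `2`, dominated convergence
makes the integral tend to `0`, uniformly in `γ`.
-/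

lemma div_sub_mem_Ico {a p y : ℝ} (h₁ : a ≤ y) (h₂ : y < a + p) : (y - a) / p ∈ Ico (0 : ℝ) 1 :=
  ⟨div_nonneg (by linarith) (by linarith), (div_lt_one (by linarith)).2 (by linarith)⟩

lemma mul_add_mem_Ico {a p z : ℝ} (hz : z ∈ Ico (0 : ℝ) 1) (ha : 0 ≤ a) (hp : 0 < p)
    (h : a + p ≤ 1) : p * z + a ∈ Ico (0 : ℝ) 1 :=
  ⟨by nlinarith [hz.1], by nlinarith [hz.2]⟩

def IsSkewTranslation {G Y : Type*} [Add G] (f : G × Y → G × Y) : Prop :=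
  ∃ (c : Y → G) (g : Y → Y), ∀ x, f x = (x.1 + c x.2, g x.2)

namespace IsSkewTranslation

variable {G Y : Type*}

lemma id [AddZeroClass G] : IsSkewTranslation (_root_.id : G × Y → G × Y) :=
  ⟨0, _root_.id, fun x => by simp⟩

lemma comp [AddSemigroup G] {f f' : G × Y → G × Y} (hf : IsSkewTranslation f)
    (hf' : IsSkewTranslation f') : IsSkewTranslation (f ∘ f') := by
  obtain ⟨c, g, hf⟩ := hf
  obtain ⟨c', g', hf'⟩ := hf'
  exact ⟨fun y => c' y + c (g' y), g ∘ g', fun x => by simp [hf, hf', add_assoc]⟩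

lemma iterate [AddMonoid G] {f : G × Y → G × Y} (hf : IsSkewTranslation f) :
    ∀ n, IsSkewTranslation f^[n]
  | 0 => .id
  | n + 1 => by rw [Function.iterate_succ']; exact hf.comp (hf.iterate n)

lemma of_apply_eq [Add G] [Zero G] {f : G × Y → G × Y}
    (h : ∀ α y, f (α, y) = (α + (f (0, y)).1, (f (0, y)).2)) : IsSkewTranslation f :=
  ⟨fun y => (f (0, y)).1, fun y => (f (0, y)).2, fun x => h x.1 x.2⟩

lemma apply_eq [AddMonoid G] {f : G × Y → G × Y} (hf : IsSkewTranslation f) (α : G) (y : Y) :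
    f (α, y) = (α + (f (0, y)).1, (f (0, y)).2) := by
  obtain ⟨c, g, hf⟩ := hf
  simp [hf]

end IsSkewTranslation

section IntBox

variable {d : ℕ}

def intBox (γ : Fin d → ℤ) (r : ℕ) : Finset (Fin d → ℤ) :=
  Fintype.piFinset fun i => Finset.Icc (γ i - r) (γ i + r)

lemma mem_intBox {γ α : Fin d → ℤ} {r : ℕ} : α ∈ intBox γ r ↔ ∀ i, |α i - γ i| ≤ r := by
  simp only [intBox, Fintype.mem_piFinset, Finset.mem_Icc, abs_le]
  exact forall_congr' fun i => by constructor <;> intro h <;> constructor <;> linarith [h.1, h.2]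

lemma card_intBox (γ : Fin d → ℤ) (r : ℕ) : (intBox γ r).card = (2 * r + 1) ^ d := by
  have h : ∀ i, (γ i + r + 1 - (γ i - r)).toNat = 2 * r + 1 := fun i => by omega
  simp [intBox, Fintype.card_piFinset, Int.card_Icc, h]

lemma add_mem_intBox {γ α β : Fin d → ℤ} {r : ℕ} : α + β ∈ intBox γ r ↔ α ∈ intBox (γ - β) r := by
  simp only [mem_intBox, Pi.add_apply, Pi.sub_apply, sub_sub_eq_add_sub]

lemma intBox_subset_intBox {γ γ' : Fin d → ℤ} {r r' : ℕ} (h : ∀ i, |γ i - γ' i| + r ≤ r') :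
    intBox γ r ⊆ intBox γ' r' := fun α hα => mem_intBox.2 fun i =>
  calc |α i - γ' i| ≤ |α i - γ i| + |γ i - γ' i| := abs_sub_le _ _ _
    _ ≤ r' := by linarith [mem_intBox.1 hα i, h i]

lemma card_symmDiff_intBox_le_two_mul (γ γ' : Fin d → ℤ) (r : ℕ) :
    (symmDiff (intBox γ' r) (intBox γ r)).card ≤ 2 * (2 * r + 1) ^ d :=
  calc _ ≤ (intBox γ' r ∪ intBox γ r).card := Finset.card_le_card symmDiff_le_sup
    _ ≤ _ := (Finset.card_union_le _ _).trans (by rw [card_intBox, card_intBox, ← two_mul])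

lemma card_symmDiff_intBox_le {γ β : Fin d → ℤ} {r s : ℕ} (hβ : ∀ i, |β i| ≤ s) (hsr : s ≤ r) :
    (symmDiff (intBox (γ - β) r) (intBox γ r)).card ≤
      (2 * (r + s) + 1) ^ d - (2 * (r - s) + 1) ^ d := by
  have hout : ∀ γ', (∀ i, |γ' i - γ i| ≤ s) → intBox γ' r ⊆ intBox γ (r + s) := fun γ' h =>
    intBox_subset_intBox fun i => by push_cast; linarith [h i]
  have hin : ∀ γ', (∀ i, |γ' i - γ i| ≤ s) → intBox γ (r - s) ⊆ intBox γ' r := fun γ' h =>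
    intBox_subset_intBox fun i => by rw [abs_sub_comm]; push_cast [hsr]; linarith [h i]
  have hβ' : ∀ i, |(γ - β) i - γ i| ≤ s := fun i => by simpa using hβ i
  have h0 : ∀ i, |γ i - γ i| ≤ (s : ℤ) := fun i => by simp
  rw [← card_intBox γ (r + s), ← card_intBox γ (r - s),
    ← Finset.card_sdiff_of_subset ((hin γ h0).trans (hout γ h0)), symmDiff_eq_sup_sdiff_inf]
  exact Finset.card_le_card (sdiff_le_sdiff (sup_le (hout _ hβ') (hout _ h0))
    (le_inf (hin _ hβ') (hin _ h0)))

lemma tendsto_box_shell_ratio (s d : ℕ) :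
    Tendsto (fun r : ℕ => ((2 * (r + s) + 1 : ℝ) ^ d - (2 * ((r : ℝ) - s) + 1) ^ d) /
      (2 * r + 1) ^ d) atTop (𝓝 0) := by
  have hx : Tendsto (fun r : ℕ => (2 * s : ℝ) / (2 * r + 1)) atTop (𝓝 0) :=
    tendsto_const_nhds.div_atTop <|
      tendsto_atTop_mono (fun r => by linarith [r.cast_nonneg (α := ℝ)]) tendsto_natCast_atTop_atTop
  have hf : Tendsto (fun x : ℝ => (1 + x) ^ d - (1 - x) ^ d) (𝓝 0) (𝓝 0) :=
    (by fun_prop : Continuous fun x : ℝ => (1 + x) ^ d - (1 - x) ^ d).tendsto' 0 0 (by simp)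
  refine (hf.comp hx).congr fun r => ?_
  have hr : (2 * r + 1 : ℝ) ≠ 0 := by positivity
  simp only [Function.comp_apply]
  rw [eq_div_iff (pow_ne_zero _ hr), sub_mul, ← mul_pow, ← mul_pow]
  congr 2 <;> field_simp <;> ring

-- The supremum over centres makes the bounds below uniform in `γ`.
def boxDefect (r : ℕ) (β : Fin d → ℤ) : ℝ≥0∞ :=
  ⨆ γ : Fin d → ℤ, ((symmDiff (intBox (γ - β) r) (intBox γ r)).card : ℝ≥0∞) / ((2 * r + 1) ^ d : ℕ)

lemma boxDefect_le_two (r : ℕ) (β : Fin d → ℤ) : boxDefect r β ≤ 2 :=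
  iSup_le fun γ => by
    rw [ENNReal.div_le_iff (Nat.cast_ne_zero.2 (by positivity)) (ENNReal.natCast_ne_top _)]
    exact_mod_cast card_symmDiff_intBox_le_two_mul _ _ _

lemma tendsto_boxDefect (β : Fin d → ℤ) : Tendsto (boxDefect · β) atTop (𝓝 0) := by
  set s := Finset.univ.sup fun i => (β i).natAbs
  have hβ : ∀ i, |β i| ≤ s := fun i => by
    rw [Int.abs_eq_natAbs]
    exact_mod_cast Finset.le_sup (f := fun i => (β i).natAbs) (Finset.mem_univ i)
  have hle : ∀ r ≥ s, boxDefect r β ≤ ENNReal.ofReal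
      (((2 * (r + s) + 1 : ℝ) ^ d - (2 * ((r : ℝ) - s) + 1) ^ d) / (2 * r + 1) ^ d) := by
    intro r hsr
    have hcast : (((2 * (r + s) + 1) ^ d - (2 * (r - s) + 1) ^ d : ℕ) : ℝ) =
        (2 * (r + s) + 1 : ℝ) ^ d - (2 * ((r : ℝ) - s) + 1) ^ d := by
      rw [Nat.cast_sub (Nat.pow_le_pow_left (by omega) d)]; push_cast [hsr]; ring
    have hN : (2 * r + 1 : ℝ) ^ d = ((2 * r + 1) ^ d : ℕ) := by push_cast; ring
    rw [← hcast, hN, ENNReal.ofReal_div_of_pos (by positivity), ENNReal.ofReal_natCast,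
      ENNReal.ofReal_natCast]
    exact iSup_le fun γ =>
      ENNReal.div_le_div_right (by exact_mod_cast card_symmDiff_intBox_le hβ hsr) _
  refine tendsto_of_tendsto_of_tendsto_of_le_of_le' tendsto_const_nhds
    (by simpa using ENNReal.tendsto_ofReal (tendsto_box_shell_ratio s d))
    (Eventually.of_forall fun _ => bot_le) ((eventually_ge_atTop s).mono hle)

lemma tendsto_lintegral_boxDefect {Y : Type*} [MeasurableSpace Y] (ν : Measure Y)
    [IsFiniteMeasure ν] {Φ : Y → Fin d → ℤ} (hΦ : Measurable Φ) :
    Tendsto (fun r => ∫⁻ y, boxDefect r (Φ y) ∂ν) atTop (𝓝 0) := by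
  simpa using tendsto_lintegral_of_dominated_convergence (F := fun r y => boxDefect r (Φ y))
    (f := 0) (fun _ => 2)
    (fun r => (Measurable.of_discrete (f := boxDefect r)).comp hΦ)
    (fun r => Eventually.of_forall fun y => boxDefect_le_two r (Φ y))
    (by simp [lintegral_const, ENNReal.mul_eq_top])
    (Eventually.of_forall fun y => tendsto_boxDefect (Φ y))

end IntBox

def unitSq : Set (ℝ × ℝ) := Ico 0 1 ×ˢ Ico 0 1

abbrev unitSqMeasure : Measure (ℝ × ℝ) :=
  (volume.restrict (Ico (0 : ℝ) 1)).prod (volume.restrict (Ico (0 : ℝ) 1))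

lemma measurableSet_unitSq : MeasurableSet unitSq := measurableSet_Ico.prod measurableSet_Ico

lemma unitSqMeasure_unitSq : unitSqMeasure unitSq = 1 := by
  simp [unitSq, Measure.prod_prod, Real.volume_Ico]

lemma ae_mem_unitSq : ∀ᵐ y ∂unitSqMeasure, y ∈ unitSq := by
  rw [unitSqMeasure, Measure.prod_restrict]
  exact ae_restrict_mem measurableSet_unitSq

section RWBox

variable {d : ℕ}

lemma rwMeasure_eq : rwMeasure d = Measure.count.prod unitSqMeasure := rfl

lemma rwBox_eq_prod (γ : Fin d → ℤ) (r : ℕ) : rwBox γ r = ↑(intBox γ r) ×ˢ unitSq := by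
  ext x; simp [rwBox, unitSq, mem_intBox]

lemma measurableSet_rwBox (γ : Fin d → ℤ) (r : ℕ) : MeasurableSet (rwBox γ r) :=
  rwBox_eq_prod γ r ▸ (Finset.measurableSet _).prod measurableSet_unitSq

lemma rwMeasure_rwBox (γ : Fin d → ℤ) (r : ℕ) :
    rwMeasure d (rwBox γ r) = ((2 * r + 1) ^ d : ℕ) := by
  rw [rwBox_eq_prod, rwMeasure_eq, Measure.prod_prod, Measure.count_apply_finset, card_intBox,
    unitSqMeasure_unitSq, mul_one]

lemma ivLim_rwFamily_of_abs_le (hd : 1 ≤ d) {φ : Set (RWSpace d) → ℝ} {u : ℕ → ℝ}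
    (hu : Tendsto u atTop (𝓝 0)) (hφ : ∀ γ r, |φ (rwBox γ r)| ≤ u r) :
    IVLim (rwMeasure d) (rwFamily d) φ 0 := by
  intro ε hε
  obtain ⟨r₀, hr₀⟩ := eventually_atTop.1 (hu.eventually (gt_mem_nhds hε))
  refine ⟨((2 * r₀ + 1) ^ d : ℕ), by positivity, ?_⟩
  rintro _ ⟨γ, r, -, rfl⟩ hM
  rw [rwMeasure_rwBox, ENNReal.toReal_natCast, Nat.cast_le,
    Nat.pow_le_pow_iff_left (by omega)] at hM
  rw [sub_zero]
  exact (hφ γ r).trans_lt (hr₀ r (by omega))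

end RWBox

namespace RW

variable {d : ℕ} (R : RW d)

lemma q_succ (k : ℕ) : R.q (k + 1) = R.q k + R.p (R.e k) :=
  Finset.sum_range_succ _ _

lemma q_mono : Monotone R.q := fun _ _ h =>
  Finset.sum_le_sum_of_subset_of_nonneg (Finset.range_subset_range.2 h)
    fun _ _ _ => R.nonneg _

lemma q_nonneg (k : ℕ) : 0 ≤ R.q k :=
  Finset.sum_nonneg fun _ _ => R.nonneg _

lemma hasSum_p_e : HasSum (fun j => R.p (R.e j)) 1 := (Equiv.hasSum_iff R.e).2 R.total

lemma q_le_one (k : ℕ) : R.q k ≤ 1 :=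
  R.hasSum_p_e.tsum_eq ▸
    R.hasSum_p_e.summable.sum_le_tsum _ fun _ _ => R.nonneg _

lemma mem_Ico_q_idx_of_bddAbove {y : ℝ} (hne : {j | R.q j ≤ y}.Nonempty)
    (hbdd : BddAbove {j | R.q j ≤ y}) : y ∈ Ico (R.q (R.idx y)) (R.q (R.idx y + 1)) :=
  ⟨Nat.sSup_mem hne hbdd, lt_of_not_ge fun h => (R.idx y).lt_succ_self.not_ge (le_csSup hbdd h)⟩

lemma mem_Ico_q_idx {y : ℝ} (hy : y ∈ Ico (0 : ℝ) 1) :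
    y ∈ Ico (R.q (R.idx y)) (R.q (R.idx y + 1)) := by
  refine R.mem_Ico_q_idx_of_bddAbove ⟨0, by simpa [q] using hy.1⟩ ?_
  obtain ⟨K, hK⟩ := (R.hasSum_p_e.tendsto_sum_nat.eventually (eventually_gt_nhds hy.2)).exists
  exact ⟨K, fun j hj => le_of_not_gt fun hKj => (hK.trans_le (R.q_mono hKj.le)).not_ge hj⟩

lemma idx_eq_of_mem_Ico {k : ℕ} {y : ℝ} (hy : y ∈ Ico (R.q k) (R.q (k + 1))) : R.idx y = k := by
  have hle : ∀ j ∈ {j | R.q j ≤ y}, j ≤ k := fun j hj =>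
    Nat.le_of_lt_succ <| lt_of_not_ge fun h => (hy.2.trans_le (R.q_mono h)).not_ge hj
  exact le_antisymm (csSup_le ⟨k, hy.1⟩ hle) (le_csSup ⟨k, hle⟩ hy.1)

lemma idx_preimage_singleton {k : ℕ} (hk : k ≠ 0) :
    R.idx ⁻¹' {k} = Ico (R.q k) (R.q (k + 1)) := by
  ext y
  refine ⟨fun (hy : R.idx y = k) => ?_, R.idx_eq_of_mem_Ico⟩
  have hne : {j | R.q j ≤ y}.Nonempty :=
    nonempty_iff_ne_empty.2 fun h => hk (hy ▸ by simp [idx, h])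
  have hbdd : BddAbove {j | R.q j ≤ y} :=
    by_contra fun h => hk (hy ▸ Nat.sSup_of_not_bddAbove h)
  exact hy ▸ R.mem_Ico_q_idx_of_bddAbove hne hbdd

lemma measurable_idx : Measurable R.idx := by
  have hfib : ∀ k ≠ 0, MeasurableSet (R.idx ⁻¹' {k}) := fun k hk => by
    rw [R.idx_preimage_singleton hk]; exact measurableSet_Ico
  refine measurable_to_countable' fun k => ?_
  obtain rfl | hk := eq_or_ne k 0
  · rw [← compl_compl {0}, preimage_compl, ← biUnion_of_singleton {0}ᶜ, preimage_iUnion₂]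
    exact (MeasurableSet.biUnion (to_countable _) hfib).compl
  · exact hfib k hk

lemma measurable_T : Measurable R.T := by
  have := R.measurable_idx
  unfold T; fun_prop

lemma measurable_Tinv : Measurable R.Tinv := by
  have := R.measurable_idx
  unfold Tinv; fun_prop

lemma q_idx_bounds {y : ℝ} (hy : y ∈ Ico (0 : ℝ) 1) :
    0 ≤ R.q (R.idx y) ∧ R.q (R.idx y) ≤ y ∧ y < R.q (R.idx y) + R.p (R.e (R.idx y)) ∧
      R.q (R.idx y) + R.p (R.e (R.idx y)) ≤ 1 := by
  have h := R.mem_Ico_q_idx hy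
  rw [R.q_succ] at h
  exact ⟨R.q_nonneg _, h.1, h.2, R.q_succ _ ▸ R.q_le_one _⟩

lemma mapsTo_T : MapsTo R.T (univ ×ˢ unitSq) (univ ×ˢ unitSq) := by
  rintro ⟨α, y₁, y₂⟩ ⟨-, hy₁, hy₂⟩
  obtain ⟨h₀, h₁, h₂, h₃⟩ := R.q_idx_bounds hy₁
  exact ⟨trivial, div_sub_mem_Ico h₁ h₂, mul_add_mem_Ico hy₂ h₀ (by linarith) h₃⟩

lemma mapsTo_Tinv : MapsTo R.Tinv (univ ×ˢ unitSq) (univ ×ˢ unitSq) := by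
  rintro ⟨α, y₁, y₂⟩ ⟨-, hy₁, hy₂⟩
  obtain ⟨h₀, h₁, h₂, h₃⟩ := R.q_idx_bounds hy₂
  exact ⟨trivial, mul_add_mem_Ico hy₁ h₀ (by linarith) h₃, div_sub_mem_Ico h₁ h₂⟩

lemma iterZ_induction {P : (RWSpace d → RWSpace d) → Prop} (hT : ∀ n, P R.T^[n])
    (hTinv : ∀ n, P R.Tinv^[n]) (t : ℤ) : P (R.iterZ t) := by
  unfold iterZ; split_ifs
  exacts [hT _, hTinv _]

lemma measurable_iterZ (t : ℤ) : Measurable (R.iterZ t) :=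
  R.iterZ_induction R.measurable_T.iterate R.measurable_Tinv.iterate t

lemma mapsTo_iterZ (t : ℤ) : MapsTo (R.iterZ t) (univ ×ˢ unitSq) (univ ×ˢ unitSq) :=
  R.iterZ_induction (P := fun f => MapsTo f _ _) R.mapsTo_T.iterate R.mapsTo_Tinv.iterate t

lemma isSkewTranslation_iterZ (t : ℤ) : IsSkewTranslation (R.iterZ t) :=
  R.iterZ_induction (IsSkewTranslation.of_apply_eq fun α y => by simp [T]).iterate
    (IsSkewTranslation.of_apply_eq fun α y => by simp [Tinv, sub_eq_add_neg]).iterate t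

def displacement (t : ℤ) (y : ℝ × ℝ) : Fin d → ℤ := (R.iterZ t (0, y)).1

lemma measurable_displacement (t : ℤ) : Measurable (R.displacement t) :=
  measurable_fst.comp ((R.measurable_iterZ t).comp measurable_prodMk_left)

lemma preimage_symmDiff_rwBox (t : ℤ) {y : ℝ × ℝ} (hy : y ∈ unitSq) (γ : Fin d → ℤ) (r : ℕ) :
    (fun α => (α, y)) ⁻¹' symmDiff (R.iterZ t ⁻¹' rwBox γ r) (rwBox γ r) =
      ↑(symmDiff (intBox (γ - R.displacement t y) r) (intBox γ r)) := by
  have hΨ : (R.iterZ t (0, y)).2 ∈ unitSq := (R.mapsTo_iterZ t ⟨trivial, hy⟩).2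
  ext α
  simp [(R.isSkewTranslation_iterZ t).apply_eq α y, rwBox_eq_prod, hy, hΨ, add_mem_intBox,
    displacement, Set.mem_symmDiff]

lemma rwMeasure_symmDiff_rwBox (t : ℤ) (γ : Fin d → ℤ) (r : ℕ) :
    rwMeasure d (symmDiff (R.iterZ t ⁻¹' rwBox γ r) (rwBox γ r)) =
      ∫⁻ y, (symmDiff (intBox (γ - R.displacement t y) r) (intBox γ r)).card ∂unitSqMeasure := by
  have hV := measurableSet_rwBox γ r
  rw [rwMeasure_eq, Measure.prod_apply_symm ((R.measurable_iterZ t hV).symmDiff hV)]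
  refine lintegral_congr_ae (ae_mem_unitSq.mono fun y hy => ?_)
  dsimp only
  rw [R.preimage_symmDiff_rwBox t hy, Measure.count_apply_finset]

lemma rwMeasure_symmDiff_div_le (t : ℤ) (γ : Fin d → ℤ) (r : ℕ) :
    rwMeasure d (symmDiff (R.iterZ t ⁻¹' rwBox γ r) (rwBox γ r)) / rwMeasure d (rwBox γ r) ≤
      ∫⁻ y, boxDefect r (R.displacement t y) ∂unitSqMeasure := by
  rw [R.rwMeasure_symmDiff_rwBox, rwMeasure_rwBox, div_eq_mul_inv,
    ← lintegral_mul_const' _ _ (ENNReal.inv_ne_top.2 (Nat.cast_ne_zero.2 (by positivity)))]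
  exact lintegral_mono fun y => le_iSup_of_le γ (div_eq_mul_inv _ _).ge

end RW

/-- Lemma 4.2: the random-walk dynamical system with the exhaustive family of boxes
satisfies (A1): for any fixed `t ∈ ℤ`, `μ(T^{-t} V Δ V) = o(μ(V))` as `μ(V) → ∞`
along `𝒱`. -/
theorem rw_A1 (d : ℕ) (hd : 1 ≤ d) (R : RW d) (t : ℤ) :
    IVLim (rwMeasure d) (rwFamily d)
      (fun V => ((rwMeasure d) (symmDiff (RW.iterZ R t ⁻¹' V) V)).toReal
        / ((rwMeasure d) V).toReal) 0 := by
  refine ivLim_rwFamily_of_abs_le hd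
    (u := fun r => (∫⁻ y, boxDefect r (R.displacement t y) ∂unitSqMeasure).toReal) ?_ fun γ r => ?_
  · simpa [Function.comp_def] using (ENNReal.tendsto_toReal ENNReal.zero_ne_top).comp
      (tendsto_lintegral_boxDefect unitSqMeasure (R.measurable_displacement t))
  · have hfin : ∫⁻ y, boxDefect r (R.displacement t y) ∂unitSqMeasure ≠ ⊤ :=
      ne_top_of_le_ne_top (lintegral_const_lt_top (ENNReal.ofNat_ne_top (n := 2))).ne
        (lintegral_mono fun y => boxDefect_le_two r _)
    rw [← ENNReal.toReal_div, abs_of_nonneg ENNReal.toReal_nonneg]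
    exact ENNReal.toReal_mono hfin (R.rwMeasure_symmDiff_div_le t γ r)
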